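/- arXiv:2008.05166 — 4 statements merged into one kernel-verified Lean document; each statement's English description precedes it below -/
import Mathlib

section
/- Let f : ℝ → ℝ be continuous on [0,1]. Then the hyperreal represented by the sequence of Riemann sums n ↦ (1/n) Σ_{k=0}^{n-1} f(k/n) is finite, and its standard part equals the integral ∫₀¹ f(t) dt. -/
/-!
The Riemann sum `n⁻¹ ∑_{k<n} f (k/n)` is the integral over `[0,1]` of the step function
`t ↦ f (⌊t n⌋ / n)`. These step functions converge to `f` pointwise on `[0,1]` and are bounded by
`sup_{[0,1]} ‖f‖`, so dominated convergence makes the Riemann sums converge to `∫₀¹ f`. A real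
sequence with limit `L` represents a finite hyperreal whose standard part is `L`.
-/

open MeasureTheory Filter Set Topology intervalIntegral Interval

lemma natFloor_eqOn_Ico {α : Type*} (h : ℕ → α) (k : ℕ) :
    EqOn (fun s : ℝ => h ⌊s⌋₊) (fun _ => h k) (Ico (k : ℝ) (k + 1)) := fun _ hs =>
  congrArg h ((Nat.floor_eq_iff ((Nat.cast_nonneg k).trans hs.1)).2 hs)

lemma natFloor_mul_div_mem_Icc {t : ℝ} (ht : t ∈ Icc (0 : ℝ) 1) (n : ℕ) :
    (⌊t * n⌋₊ : ℝ) / n ∈ Icc (0 : ℝ) 1 := by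
  refine ⟨by positivity, div_le_one_of_le₀ ?_ n.cast_nonneg⟩
  calc (⌊t * n⌋₊ : ℝ) ≤ t * n := Nat.floor_le (mul_nonneg ht.1 n.cast_nonneg)
    _ ≤ n := mul_le_of_le_one_left n.cast_nonneg ht.2

variable {E : Type*} [NormedAddCommGroup E] [NormedSpace ℝ E]

theorem tendsto_integral_natFloor_step {f : ℝ → E} (hf : ContinuousOn f (Icc 0 1)) :
    Tendsto (fun n : ℕ => ∫ t in (0 : ℝ)..1, f (⌊t * n⌋₊ / n)) atTop
      (𝓝 (∫ t in (0 : ℝ)..1, f t)) := by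
  obtain ⟨C, hC⟩ := isCompact_Icc.exists_bound_of_continuousOn hf
  have hIcc : ∀ᵐ t ∂volume, t ∈ Ι (0 : ℝ) 1 → t ∈ Icc (0 : ℝ) 1 := by
    filter_upwards with t ht
    exact Ioc_subset_Icc_self (uIoc_of_le (zero_le_one' ℝ) ▸ ht)
  refine tendsto_integral_filter_of_dominated_convergence (fun _ => C)
    (Eventually.of_forall fun n => ?_) (Eventually.of_forall fun n => ?_)
    intervalIntegrable_const ?_
  · exact (StronglyMeasurable.of_discrete (f := fun m : ℕ => f (m / n))).comp_measurable
      (by fun_prop : Measurable fun t : ℝ => ⌊t * n⌋₊) |>.aestronglyMeasurable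
  · filter_upwards [hIcc] with t ht ht'
    exact hC _ (natFloor_mul_div_mem_Icc (ht ht') n)
  · filter_upwards [hIcc] with t ht ht'
    have hlim := (tendsto_nat_floor_mul_div_atTop (ht ht').1).comp tendsto_natCast_atTop_atTop
    exact (hf t (ht ht')).tendsto.comp (tendsto_nhdsWithin_iff.2
      ⟨hlim, Eventually.of_forall (natFloor_mul_div_mem_Icc (ht ht'))⟩)

variable [CompleteSpace E]

lemma integral_comp_natFloor_eq_sum (h : ℕ → E) (n : ℕ) :
    ∫ s in (0 : ℝ)..n, h ⌊s⌋₊ = ∑ k ∈ Finset.range n, h k := by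
  have hpiece (k : ℕ) : ∫ s in (k : ℝ)..(k + 1 : ℕ), h ⌊s⌋₊ = h k := by
    rw [Nat.cast_succ, integral_of_le (by linarith), ← integral_Ico_eq_integral_Ioc,
      setIntegral_congr_fun measurableSet_Ico (natFloor_eqOn_Ico h k), setIntegral_const,
      Real.volume_real_Ico_of_le (by linarith), add_sub_cancel_left, one_smul]
  have hint (k : ℕ) (_ : k < n) :
      IntervalIntegrable (fun s : ℝ => h ⌊s⌋₊) volume k (k + 1 : ℕ) := by
    rw [Nat.cast_succ, intervalIntegrable_iff_integrableOn_Ico_of_le (by linarith)]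
    exact (integrableOn_const measure_Ico_lt_top.ne).congr_fun (natFloor_eqOn_Ico h k).symm
      measurableSet_Ico
  rw [← Nat.cast_zero, ← sum_integral_adjacent_intervals hint]
  exact Finset.sum_congr rfl fun k _ => hpiece k

lemma integral_natFloor_step_eq_riemannSum (f : ℝ → E) {n : ℕ} (hn : n ≠ 0) :
    ∫ t in (0 : ℝ)..1, f (⌊t * n⌋₊ / n) = (n : ℝ)⁻¹ • ∑ k ∈ Finset.range n, f (k / n) := by
  rw [integral_comp_mul_right (fun s => f (⌊s⌋₊ / n)) (Nat.cast_ne_zero.2 hn), zero_mul, one_mul]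
  exact congrArg _ (integral_comp_natFloor_eq_sum (fun m : ℕ => f (m / n)) n)

theorem tendsto_riemannSum_integral {f : ℝ → E} (hf : ContinuousOn f (Icc 0 1)) :
    Tendsto (fun n : ℕ => (n : ℝ)⁻¹ • ∑ k ∈ Finset.range n, f (k / n)) atTop
      (𝓝 (∫ t in (0 : ℝ)..1, f t)) := by
  refine (tendsto_integral_natFloor_step hf).congr' ?_
  filter_upwards [eventually_ne_atTop 0] with n hn
  exact integral_natFloor_step_eq_riemannSum f hn

open Hyperreal

/-- For `f` continuous on `[0,1]`, the hyperreal given by the sequence of Riemann sums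
`n ↦ (1/n) Σ_{k<n} f(k/n)` is finite, and its standard part is `∫₀¹ f`. -/
theorem st_riemann_sum_eq_integral (f : ℝ → ℝ)
    (hf : ContinuousOn f (Set.Icc (0 : ℝ) 1)) :
    ¬ (Hyperreal.ofSeq fun n : ℕ =>
        (1 / (n : ℝ)) * ∑ k ∈ Finset.range n, f ((k : ℝ) / (n : ℝ))).Infinite ∧
    Hyperreal.st (Hyperreal.ofSeq fun n : ℕ =>
        (1 / (n : ℝ)) * ∑ k ∈ Finset.range n, f ((k : ℝ) / (n : ℝ)))
      = ∫ t in (0 : ℝ)..1, f t := by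
  have h : IsSt (ofSeq fun n : ℕ => (1 / (n : ℝ)) * ∑ k ∈ Finset.range n, f (k / n))
      (∫ t in (0 : ℝ)..1, f t) :=
    isSt_of_tendsto (by simpa only [one_div, smul_eq_mul] using tendsto_riemannSum_integral hf)
  exact ⟨h.not_infinite, h.st_eq⟩
end

section
/- For real numbers a and b, the complementarity condition (0 ≤ a, 0 ≤ b, and a·b = 0) holds if and only if there exist a real s and a Boolean γ such that: γ is true exactly when s ≤ 0, s equals -b if γ and a otherwise, and (if γ then a else b) equals 0. -/
/-- The complementarity condition `0 ≤ a ⊥ b ≥ 0` is equivalent to its encoding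
as guarded equations with an auxiliary variable `s` and a guard `γ`. -/
theorem complementarity_iff_guarded (a b : ℝ) :
    (0 ≤ a ∧ 0 ≤ b ∧ a * b = 0) ↔
      ∃ (s : ℝ) (γ : Bool),
        (γ = true ↔ s ≤ 0) ∧
        s = (if γ then -b else a) ∧
        (if γ then a else b) = 0 := by
  constructor
  · rintro ⟨ha, hb, hab⟩
    rcases mul_eq_zero.1 hab with h | h
    · exact ⟨-b, true, by simpa using hb, by simp, by simp [h]⟩
    · rcases eq_or_lt_of_le ha with h' | h'
      · exact ⟨-b, true, by simp [h], by simp, by simp [← h']⟩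
      · exact ⟨a, false, by simp [not_le.2 h'], by simp, by simp [h]⟩
  · rintro ⟨s, γ, hγ, hs, h0⟩
    cases γ <;> simp_all <;> linarith
end

section
/- Let H : ℝ × ℝ × ℝ → ℝ be C¹, let (z₀, x₀) ∈ ℝ² satisfy H(z₀, x₀, 0) = 0, and assume ∂H/∂z (z₀, x₀, 0) ≠ 0. Then for every pair of hyperreals (x, d) with x ≈ x₀ and d ≈ 0, there exists a hyperreal z with st(z) = z₀ and H*(z, x, d) = 0. -/
/-!
The implicit function theorem, applied to `(q, z) ↦ H z q.1 q.2` at `((x₀, 0), z₀)`, yields a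
solution map `ψ` with `ψ q → z₀` as `q → (x₀, 0)` and `H (ψ q) q.1 q.2 = 0` near `(x₀, 0)`.
Writing `x` and `d` as ultrapower classes of sequences `f` and `k`, the class of `n ↦ ψ (f n, k n)`
is the required `z`: its standard part is `z₀` by continuity, and the equation holds for
hyperfilter-almost every `n` because `(f n, k n) → (x₀, 0)` along the hyperfilter.
-/

open Hyperreal

/-- The nonstandard (ultrapower) lifting of a ternary standard function to the
hyperreals. -/
noncomputable def Hyperreal.lift3 (H : ℝ → ℝ → ℝ → ℝ) (z x d : ℝ*) : ℝ* :=
  Filter.Germ.map₂ (fun z' (p : ℝ × ℝ) => H z' p.1 p.2) z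
    (Filter.Germ.map₂ (Prod.mk : ℝ → ℝ → ℝ × ℝ) x d)

open Filter Topology

theorem ContinuousLinearMap.isInvertible_of_apply_one_ne_zero {𝕜 : Type*} [Field 𝕜]
    [TopologicalSpace 𝕜] [IsTopologicalRing 𝕜] {L : 𝕜 →L[𝕜] 𝕜} (hL : L 1 ≠ 0) :
    L.IsInvertible :=
  ⟨ContinuousLinearEquiv.unitsEquivAut 𝕜 (Units.mk0 (L 1) hL), ext_ring (one_mul _)⟩

theorem exists_implicit_solution_of_deriv_ne_zero {𝕜 : Type*} [RCLike 𝕜] (H : 𝕜 → 𝕜 → 𝕜 → 𝕜)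
    (hH : ContDiff 𝕜 1 (fun p : 𝕜 × 𝕜 × 𝕜 => H p.1 p.2.1 p.2.2))
    {z₀ x₀ : 𝕜} (h0 : H z₀ x₀ 0 = 0) (hJ : deriv (fun z => H z x₀ 0) z₀ ≠ 0) :
    ∃ ψ : 𝕜 × 𝕜 → 𝕜, Tendsto ψ (𝓝 (x₀, 0)) (𝓝 z₀) ∧
      ∀ᶠ q in 𝓝 (x₀, 0), H (ψ q) q.1 q.2 = 0 := by
  set F : (𝕜 × 𝕜) × 𝕜 → 𝕜 := fun p => H p.2 p.1.1 p.1.2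
  have hF : ContDiff 𝕜 1 F := hH.comp (contDiff_snd.prodMk contDiff_fst)
  have dF := hF.contDiffAt.hasStrictFDerivAt (x := ((x₀, 0), z₀)) one_ne_zero
  have hpartial : (fderiv 𝕜 F ((x₀, 0), z₀) ∘L .inr 𝕜 (𝕜 × 𝕜) 𝕜) 1 =
      deriv (fun z => H z x₀ 0) z₀ := by
    have hinr : HasDerivAt (fun z : 𝕜 => ((x₀, (0 : 𝕜)), z)) ((0, 0), 1) z₀ :=
      (hasDerivAt_const _ _).prodMk (hasDerivAt_id z₀)
    exact (dF.hasFDerivAt.comp_hasDerivAt z₀ hinr).deriv.symm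
  have hinv := ContinuousLinearMap.isInvertible_of_apply_one_ne_zero (hpartial ▸ hJ)
  refine ⟨dF.implicitFunctionOfProdDomain hinv,
    dF.tendsto_implicitFunctionOfProdDomain hinv, ?_⟩
  simpa [F, h0] using dF.eventually_apply_implicitFunctionOfProdDomain hinv

theorem Hyperreal.exists_isSt_lift3_eq_zero {H : ℝ → ℝ → ℝ → ℝ} {ψ : ℝ × ℝ → ℝ} {q₀ : ℝ × ℝ}
    {z₀ : ℝ} (hψ : Tendsto ψ (𝓝 q₀) (𝓝 z₀)) (hsol : ∀ᶠ q in 𝓝 q₀, H (ψ q) q.1 q.2 = 0)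
    {x d : ℝ*} (hx : IsSt x q₀.1) (hd : IsSt d q₀.2) :
    ∃ z : ℝ*, IsSt z z₀ ∧ lift3 H z x d = 0 := by
  obtain ⟨f, rfl⟩ := ofSeq_surjective x
  obtain ⟨k, rfl⟩ := ofSeq_surjective d
  have hq : Tendsto (fun n => (f n, k n)) (hyperfilter ℕ) (𝓝 q₀) :=
    (isSt_ofSeq_iff_tendsto.1 hx).prodMk_nhds (isSt_ofSeq_iff_tendsto.1 hd)
  exact ⟨ofSeq fun n => ψ (f n, k n), isSt_ofSeq_iff_tendsto.2 (hψ.comp hq),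
    Germ.coe_eq.2 (hq.eventually hsol)⟩

/-- Standardizing equations (lifting direction): if `H` is C¹, `H(z₀, x₀, 0) = 0`
and `∂H/∂z (z₀, x₀, 0) ≠ 0`, then for all hyperreals `x ≈ x₀` and `d ≈ 0` there is
a hyperreal `z` with standard part `z₀` satisfying the lifted equation
`H*(z, x, d) = 0`. -/
theorem standard_solution_lifts (H : ℝ → ℝ → ℝ → ℝ)
    (hH : ContDiff ℝ 1 (fun p : ℝ × ℝ × ℝ => H p.1 p.2.1 p.2.2))
    (z₀ x₀ : ℝ) (h0 : H z₀ x₀ 0 = 0)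
    (hJ : deriv (fun z => H z x₀ 0) z₀ ≠ 0) :
    ∀ x d : ℝ*, Infinitesimal (x - (x₀ : ℝ*)) → Infinitesimal d →
      ∃ z : ℝ*, IsSt z z₀ ∧ Hyperreal.lift3 H z x d = 0 := by
  intro x d hx hd
  obtain ⟨ψ, hψ, hsol⟩ := exists_implicit_solution_of_deriv_ne_zero H hH h0 hJ
  have hxst : IsSt x x₀ := by simpa using IsSt.add hx (isSt_refl_real x₀)
  exact exists_isSt_lift3_eq_zero hψ hsol hxst hd
end

section
/- Let G be a finite set of pairs (bipartite incidence relation) between a finite set F of equations and a finite set X of variables, with weights w : G → ℕ, and let M ≥ 1 be a natural number. Consider the constraint system S_w over offsets c : F → ℕ and d : X → ℕ: c_f ≥ 0 and d_x ≥ c_f + w(f,x) for all (f,x) ∈ G. If (c, d) is the pointwise least solution of S_w, then (M·c, M·d) is the pointwise least solution of S_{M·w} (the same system with all weights multiplied by M). -/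
/-- Σ-method offsets scale linearly with the weights: if `(c, d)` is the pointwise
least solution of the offset constraint system `c f + w f x ≤ d x` (for `(f,x)` in
the incidence relation `G`), then `(M·c, M·d)` is the pointwise least solution of
the system with all weights multiplied by `M ≥ 1`. -/
theorem sigma_method_offsets_scale
    {F X : Type*} (G : F → X → Prop) (w : F → X → ℕ) (M : ℕ) (hM : 1 ≤ M)
    (c : F → ℕ) (d : X → ℕ)
    (hsol : ∀ f x, G f x → c f + w f x ≤ d x)
    (hleast : ∀ (c' : F → ℕ) (d' : X → ℕ),
      (∀ f x, G f x → c' f + w f x ≤ d' x) →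
        (∀ f, c f ≤ c' f) ∧ (∀ x, d x ≤ d' x)) :
    (∀ f x, G f x → M * c f + M * w f x ≤ M * d x) ∧
    (∀ (c' : F → ℕ) (d' : X → ℕ),
      (∀ f x, G f x → c' f + M * w f x ≤ d' x) →
        (∀ f, M * c f ≤ c' f) ∧ (∀ x, M * d x ≤ d' x)) := by
  have hMpos : 0 < M := hM
  constructor
  · intro f x hfx
    have := hsol f x hfx
    calc M * c f + M * w f x = M * (c f + w f x) := (Nat.mul_add M _ _).symm
    _ ≤ M * d x := Nat.mul_le_mul_left M this
  · intro c' d' h'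
    have hfloor : ∀ f x, G f x → c' f / M + w f x ≤ d' x / M := by
      intro f x hfx
      rw [Nat.le_div_iff_mul_le hMpos]
      calc (c' f / M + w f x) * M = c' f / M * M + w f x * M := add_mul _ _ _
        _ ≤ c' f + M * w f x := by
            apply Nat.add_le_add (Nat.div_mul_le_self _ _)
            rw [mul_comm]
        _ ≤ d' x := h' f x hfx
    obtain ⟨hc, hd⟩ := hleast (fun f => c' f / M) (fun x => d' x / M) hfloor
    constructor
    · intro f
      calc M * c f ≤ M * (c' f / M) := Nat.mul_le_mul_left M (hc f)
        _ ≤ c' f := Nat.mul_div_le _ _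
    · intro x
      calc M * d x ≤ M * (d' x / M) := Nat.mul_le_mul_left M (hd x)
        _ ≤ d' x := Nat.mul_div_le _ _
end
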